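/- Suppose m₁ = m₂. Let x ∈ 𝒟 satisfy S(x) = x and let γ = (ξ, θ, α) be the solution of (*) with initial condition x. If there exist T ≠ 0 and k ∈ ℤ such that S(γ(T)) = γ(T) + (0, 0, 2πk), then the ξ and θ components of γ are periodic, and 2T is a period: ξ(t + 2T) = ξ(t) and θ(t + 2T) = θ(t) for all t ∈ ℝ. -/

import Mathlib

/-!
For `m₁ = m₂` we have `2θ* = π/2` and `l(π/2 - θ) = -l(θ)`, so the map `S` (up to a shift of `α`
by a multiple of `2π`) reverses the vector field of (*): if `γ` is a solution, so is
`t ↦ S(γ(2c - t))`. By uniqueness, a solution meeting `Fix S` (mod `2π` in `α`) at time `c` is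
therefore reflection-symmetric about `c`: `ξ(2c - t) = ξ(t)` and `θ(2c - t) = π/2 - θ(t)`.
The two reflections about `0` and `T` compose to the translation by `2T`.
-/

/-- The constant `m = m₁ + m₂ + 2/g`. -/
noncomputable def mconst (g m₁ m₂ : ℕ) : ℝ := (m₁ : ℝ) + (m₂ : ℝ) + 2 / (g : ℝ)

/-- The angle `θ* = arctan √(m₁/m₂)`. -/
noncomputable def thetaStar (m₁ m₂ : ℕ) : ℝ :=
  Real.arctan (Real.sqrt ((m₁ : ℝ) / (m₂ : ℝ)))

/-- `l(θ) = m₁ cos² θ - m₂ sin² θ`. -/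
noncomputable def lfun (m₁ m₂ : ℕ) (θ : ℝ) : ℝ :=
  (m₁ : ℝ) * Real.cos θ ^ 2 - (m₂ : ℝ) * Real.sin θ ^ 2

/-- `(ξ, θ, α)` is a (globally defined) solution of the ODE system (*):
`ξ' = cos α · sin 2θ`, `θ' = sin α · sin 2θ`,
`α' = sin α · sin 2θ · (exp((4/g)ξ) - m) + 2 cos α · l(θ)`. -/
def IsSolution (g m₁ m₂ : ℕ) (ξ θ α : ℝ → ℝ) : Prop :=
  ∀ t : ℝ,
    HasDerivAt ξ (Real.cos (α t) * Real.sin (2 * θ t)) t ∧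
    HasDerivAt θ (Real.sin (α t) * Real.sin (2 * θ t)) t ∧
    HasDerivAt α
      (Real.sin (α t) * Real.sin (2 * θ t) *
          (Real.exp (4 / (g : ℝ) * ξ t) - mconst g m₁ m₂) +
        2 * Real.cos (α t) * lfun m₁ m₂ (θ t)) t

open Real Topology

theorem IsIntegralCurve.eq_of_contDiff {E : Type*} [NormedAddCommGroup E] [NormedSpace ℝ E]
    {v : E → E} (hv : ContDiff ℝ 1 v) {γ γ' : ℝ → E}
    (hγ : IsIntegralCurve γ fun _ ↦ v) (hγ' : IsIntegralCurve γ' fun _ ↦ v) {t₀ : ℝ}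
    (h : γ t₀ = γ' t₀) : γ = γ' := by
  have hopen : IsOpen {t | γ t = γ' t} := by
    refine isOpen_iff_mem_nhds.2 fun t₁ (ht₁ : γ t₁ = γ' t₁) ↦ ?_
    obtain ⟨K, s, hs, hlip⟩ := hv.contDiffAt.exists_lipschitzOnWith (x := γ t₁)
    have hγs : ∀ᶠ t in 𝓝 t₁, γ t ∈ s := hγ.continuous.continuousAt.preimage_mem_nhds hs
    have hγ's : ∀ᶠ t in 𝓝 t₁, γ' t ∈ s :=
      hγ'.continuous.continuousAt.preimage_mem_nhds (ht₁ ▸ hs)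
    exact ODE_solution_unique_of_eventually (v := fun _ ↦ v) (s := fun _ ↦ s)
      (.of_forall fun _ ↦ hlip) (hγs.mono fun t ht ↦ ⟨hγ t, ht⟩)
      (hγ's.mono fun t ht ↦ ⟨hγ' t, ht⟩) ht₁
  have hclopen : IsClopen {t | γ t = γ' t} := ⟨isClosed_eq hγ.continuous hγ'.continuous, hopen⟩
  funext t
  exact Set.eq_univ_iff_forall.1 (hclopen.eq_univ ⟨t₀, h⟩) t

noncomputable def odeField (g m₁ m₂ : ℕ) (p : ℝ × ℝ × ℝ) : ℝ × ℝ × ℝ :=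
  (cos p.2.2 * sin (2 * p.2.1),
   sin p.2.2 * sin (2 * p.2.1),
   sin p.2.2 * sin (2 * p.2.1) * (exp (4 / (g : ℝ) * p.1) - mconst g m₁ m₂) +
     2 * cos p.2.2 * lfun m₁ m₂ p.2.1)

theorem contDiff_odeField (g m₁ m₂ : ℕ) : ContDiff ℝ 1 (odeField g m₁ m₂) := by
  unfold odeField lfun
  fun_prop

section IsSolution

variable {g m₁ m₂ : ℕ} {ξ θ α ξ' θ' α' : ℝ → ℝ}

theorem IsSolution.isIntegralCurve (h : IsSolution g m₁ m₂ ξ θ α) :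
    IsIntegralCurve (fun t ↦ (ξ t, θ t, α t)) fun _ ↦ odeField g m₁ m₂ := fun t ↦
  (h t).1.prodMk ((h t).2.1.prodMk (h t).2.2)

theorem IsSolution.unique (h : IsSolution g m₁ m₂ ξ θ α) (h' : IsSolution g m₁ m₂ ξ' θ' α')
    {t₀ : ℝ} (hξ : ξ t₀ = ξ' t₀) (hθ : θ t₀ = θ' t₀) (hα : α t₀ = α' t₀) (t : ℝ) :
    ξ t = ξ' t ∧ θ t = θ' t ∧ α t = α' t := by
  have := congrFun (h.isIntegralCurve.eq_of_contDiff (contDiff_odeField g m₁ m₂)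
    h'.isIntegralCurve (t₀ := t₀) (by rw [hξ, hθ, hα])) t
  simpa only [Prod.mk.injEq] using this

theorem lfun_pi_div_two_sub (m : ℕ) (x : ℝ) : lfun m m (π / 2 - x) = -lfun m m x := by
  rw [lfun, lfun, cos_pi_div_two_sub, sin_pi_div_two_sub]
  ring

theorem IsSolution.reflect {m : ℕ} (h : IsSolution g m m ξ θ α) (c : ℝ) (n : ℤ) :
    IsSolution g m m (fun t ↦ ξ (c - t)) (fun t ↦ π / 2 - θ (c - t))
      (fun t ↦ π - α (c - t) + n * (2 * π)) := by
  intro t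
  obtain ⟨hξ, hθ, hα⟩ := h (c - t)
  have hsin : sin (2 * (π / 2 - θ (c - t))) = sin (2 * θ (c - t)) := by
    rw [show 2 * (π / 2 - θ (c - t)) = π - 2 * θ (c - t) by ring, sin_pi_sub]
  simp only [sin_add_int_mul_two_pi, cos_add_int_mul_two_pi, sin_pi_sub, cos_pi_sub, hsin,
    lfun_pi_div_two_sub]
  refine ⟨(hξ.comp_const_sub c t).congr_deriv (by ring),
    ((hθ.comp_const_sub c t).const_sub (π / 2)).congr_deriv (by ring),
    (((hα.comp_const_sub c t).const_sub π).add_const (n * (2 * π))).congr_deriv (by ring)⟩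

theorem IsSolution.reflection_symmetric {m : ℕ} (h : IsSolution g m m ξ θ α) {c : ℝ} {n : ℤ}
    (hθ : θ c = π / 2 - θ c) (hα : α c = π - α c + n * (2 * π)) (t : ℝ) :
    ξ (2 * c - t) = ξ t ∧ π / 2 - θ (2 * c - t) = θ t := by
  have hc : 2 * c - c = c := by ring
  obtain ⟨hξ, hθ, -⟩ := (h.reflect (2 * c) n).unique h (t₀ := c)
    (by simp only [hc]) (by simp only [hc]; linarith) (by simp only [hc]; linarith) t
  exact ⟨hξ, hθ⟩

end IsSolution

theorem two_mul_thetaStar_self {m : ℕ} (hm : 0 < m) : 2 * thetaStar m m = π / 2 := by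
  rw [thetaStar, div_self (by positivity), sqrt_one, arctan_one]
  ring

theorem stmt5_general (g m₁ m₂ : ℕ)
    (hm₁ : 0 < m₁)
    (hm : m₁ = m₂) (ξ θ α : ℝ → ℝ) (hsol : IsSolution g m₁ m₂ ξ θ α)
    (hfix : θ 0 = 2 * thetaStar m₁ m₂ - θ 0 ∧ α 0 = Real.pi - α 0)
    (T : ℝ) (k : ℤ)
    (hS : ξ T = ξ T ∧ 2 * thetaStar m₁ m₂ - θ T = θ T ∧
      Real.pi - α T = α T + 2 * Real.pi * k) :
    ∀ t : ℝ, ξ (t + 2 * T) = ξ t ∧ θ (t + 2 * T) = θ t := by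
  subst hm
  rw [two_mul_thetaStar_self hm₁] at hfix hS
  intro t
  obtain ⟨hξ₀, hθ₀⟩ := hsol.reflection_symmetric (c := 0) (n := 0) (by linarith)
    (by push_cast; linarith) t
  obtain ⟨hξT, hθT⟩ := hsol.reflection_symmetric (c := T) (n := -k) (by linarith)
    (by push_cast; linarith) (t + 2 * T)
  rw [show 2 * T - (t + 2 * T) = 2 * 0 - t by ring] at hξT hθT
  constructor <;> linarith

/-- Criterion for periodicity: if `m₁ = m₂`, `x ∈ 𝒟` is a fixed point of `S`
and the solution `γ` through `x` satisfies `S(γ(T)) = γ(T) + (0, 0, 2πk)` for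
some `T ≠ 0`, `k ∈ ℤ`, then the `ξ` and `θ` components of `γ` are periodic
with period `2T`. -/
theorem stmt5 (g m₁ m₂ : ℕ) (hg : g = 1 ∨ g = 2 ∨ g = 3 ∨ g = 4 ∨ g = 6)
    (hm₁ : 0 < m₁) (hm₂ : 0 < m₂)
    (hm : m₁ = m₂) (ξ θ α : ℝ → ℝ) (hsol : IsSolution g m₁ m₂ ξ θ α)
    (hD : θ 0 ∈ Set.Ioo 0 (Real.pi / 2))
    (hfix : θ 0 = 2 * thetaStar m₁ m₂ - θ 0 ∧ α 0 = Real.pi - α 0)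
    (T : ℝ) (hT : T ≠ 0) (k : ℤ)
    (hS : ξ T = ξ T ∧ 2 * thetaStar m₁ m₂ - θ T = θ T ∧
      Real.pi - α T = α T + 2 * Real.pi * k) :
    ∀ t : ℝ, ξ (t + 2 * T) = ξ t ∧ θ (t + 2 * T) = θ t :=
  stmt5_general g m₁ m₂ hm₁ hm ξ θ α hsol hfix T k hS
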